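/- There exist sharp qubit observables that do not commute but whose two conditionings coincide: for the spin component observables S^m and S^n on ℂ² in directions m = (0,0,1) and n = (1,0,0) (i.e. S^m = {diag(1,0), diag(0,1)} and S^n = {(1/2)[[1,1],[1,1]], (1/2)[[1,−1],[−1,1]]}), one has (S^n | S^m) = {(1/2)I, (1/2)I} = (S^m | S^n), while S^m_+ S^n_+ ≠ S^n_+ S^m_+. -/

import Mathlib

/-!
Write `Z = σ_z` and `X = σ_x`, so that `S^m_± = (1 ± Z)/2` and `S^n_± = (1 ± X)/2`. These are
projections, hence equal to their square roots, and the sequential product with them is plain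
conjugation. For any `x` and `b`, conjugating `b` by `(1 + x)/2` and by `(1 - x)/2` and summing
gives `(b + x b x)/2`. When `x` is an involution anticommuting with `z`, conjugation by `x` sends
`(1 ± z)/2` to `(1 ∓ z)/2`, so the sum is `(1/2) I`; as `X` and `Z` anticommute, this applies in
both directions. The observables do not commute because `XZ ≠ ZX`.
-/

open Matrix
open scoped Classical ComplexOrder

/-- The positive square root of a positive semidefinite matrix
(junk value `0` on non-positive-semidefinite matrices). -/
noncomputable def sqrtM {ι : Type*} [Fintype ι] [DecidableEq ι] (a : Matrix ι ι ℂ) :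
    Matrix ι ι ℂ :=
  if h : a.PosSemidef then
    (h.1.eigenvectorUnitary : Matrix ι ι ℂ) *
      diagonal (fun i => ((Real.sqrt (h.1.eigenvalues i) : ℝ) : ℂ)) *
      (star h.1.eigenvectorUnitary : Matrix ι ι ℂ)
  else 0

/-- The sequential product `a ∘ b = a^{1/2} b a^{1/2}` of effects. -/
noncomputable def seqProd {ι : Type*} [Fintype ι] [DecidableEq ι] (a b : Matrix ι ι ℂ) :
    Matrix ι ι ℂ :=
  sqrtM a * b * sqrtM a

/-- An effect: an operator `a` with `0 ≤ a ≤ I` in the Loewner order. -/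
def IsEffect {ι : Type*} [Fintype ι] [DecidableEq ι] (a : Matrix ι ι ℂ) : Prop :=
  a.PosSemidef ∧ (1 - a).PosSemidef

/-- The effect `S^m_+` for the direction `m = (0,0,1)`. -/
noncomputable def Smp : Matrix (Fin 2) (Fin 2) ℂ := !![1,0; 0,0]

/-- The effect `S^m_-` for the direction `m = (0,0,1)`. -/
noncomputable def Smm : Matrix (Fin 2) (Fin 2) ℂ := !![0,0; 0,1]

/-- The effect `S^n_+` for the direction `n = (1,0,0)`. -/
noncomputable def Snp : Matrix (Fin 2) (Fin 2) ℂ := (1/2 : ℂ) • !![1,1; 1,1]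

/-- The effect `S^n_-` for the direction `n = (1,0,0)`. -/
noncomputable def Snm : Matrix (Fin 2) (Fin 2) ℂ := (1/2 : ℂ) • !![1,-1; -1,1]

lemma IsStarProjection.sqrtM_eq {ι : Type*} [Fintype ι] [DecidableEq ι] {p : Matrix ι ι ℂ}
    (hp : IsStarProjection p) : sqrtM p = p := by
  have hherm : p.IsHermitian := hp.isSelfAdjoint.isHermitian
  have hpsd : p.PosSemidef := by
    simpa only [hherm.eq, hp.isIdempotentElem.eq] using posSemidef_conjTranspose_mul_self p
  have hdiag := hpsd.1.conjStarAlgAut_star_eigenvectorUnitary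
  have hidem : diagonal (RCLike.ofReal ∘ hpsd.1.eigenvalues : ι → ℂ) *
      diagonal (RCLike.ofReal ∘ hpsd.1.eigenvalues) =
      diagonal (RCLike.ofReal ∘ hpsd.1.eigenvalues) := by
    rw [← hdiag, ← map_mul, hp.isIdempotentElem.eq]
  have heig (i : ι) : √(hpsd.1.eigenvalues i) = hpsd.1.eigenvalues i := by
    rw [diagonal_mul_diagonal] at hidem
    have h := congrFun (diagonal_injective hidem) i
    simp only [Function.comp_apply] at h
    have hnn := hpsd.eigenvalues_nonneg i
    exact (Real.sqrt_eq_iff_mul_self_eq hnn hnn).mpr (by exact_mod_cast h.symm)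
  rw [sqrtM, dif_pos hpsd]
  conv_rhs => rw [hherm.spectral_theorem]
  simp [heig, Unitary.conjStarAlgAut_apply, Function.comp_def]

lemma IsStarProjection.seqProd_eq {ι : Type*} [Fintype ι] [DecidableEq ι] {p : Matrix ι ι ℂ}
    (hp : IsStarProjection p) (b : Matrix ι ι ℂ) : seqProd p b = p * b * p := by
  rw [seqProd, hp.sqrtM_eq]

section Pinching

variable {𝕜 A : Type*} [Field 𝕜] [Ring A] [Algebra 𝕜 A]

lemma pinching_half_smul_one_add_sub [NeZero (2 : 𝕜)] (x b : A) :
    (1/2 : 𝕜) • (1 + x) * b * ((1/2 : 𝕜) • (1 + x)) +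
      (1/2 : 𝕜) • (1 - x) * b * ((1/2 : 𝕜) • (1 - x)) = (1/2 : 𝕜) • (b + x * b * x) := by
  simp only [smul_mul_assoc, mul_smul_comm, smul_smul, ← smul_add]
  have key : (1 + x) * b * (1 + x) + (1 - x) * b * (1 - x) = (2 : 𝕜) • (b + x * b * x) := by
    rw [two_smul]; noncomm_ring
  rw [key, smul_smul]
  congr 1
  field_simp

lemma conj_half_smul_one_add_of_anticommute {x z : A} (hx : x * x = 1) (hxz : x * z = -(z * x)) :
    x * ((1/2 : 𝕜) • (1 + z)) * x = (1/2 : 𝕜) • (1 - z) := by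
  rw [mul_smul_comm, smul_mul_assoc, mul_add, add_mul, mul_one, hx, hxz, neg_mul, mul_assoc, hx,
    mul_one, sub_eq_add_neg]

lemma conj_half_smul_one_sub_of_anticommute {x z : A} (hx : x * x = 1) (hxz : x * z = -(z * x)) :
    x * ((1/2 : 𝕜) • (1 - z)) * x = (1/2 : 𝕜) • (1 + z) := by
  rw [mul_smul_comm, smul_mul_assoc, mul_sub, sub_mul, mul_one, hx, hxz, neg_mul, mul_assoc, hx,
    mul_one, sub_neg_eq_add]

lemma isIdempotentElem_half_smul_one_add [NeZero (2 : 𝕜)] {x : A} (hxx : x * x = 1) :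
    IsIdempotentElem ((1/2 : 𝕜) • (1 + x)) := by
  have key : (1 + x) * (1 + x) = (2 : 𝕜) • (1 + x) := by
    simp only [add_mul, mul_add, hxx, one_mul, mul_one, two_smul]
    abel
  rw [IsIdempotentElem, smul_mul_smul, key, smul_smul]
  congr 1
  field_simp

lemma half_smul_one_add_add_half_smul_one_sub [NeZero (2 : 𝕜)] (z : A) :
    (1/2 : 𝕜) • (1 + z) + (1/2 : 𝕜) • (1 - z) = 1 := by
  rw [← smul_add, add_add_sub_cancel, ← two_smul 𝕜, smul_smul, one_div, inv_mul_cancel₀ two_ne_zero,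
    one_smul]

variable [NeZero (2 : 𝕜)] {x z : A}

lemma pinching_half_smul_one_add_of_anticommute (hx : x * x = 1) (hxz : x * z = -(z * x)) :
    (1/2 : 𝕜) • (1 + x) * ((1/2 : 𝕜) • (1 + z)) * ((1/2 : 𝕜) • (1 + x)) +
      (1/2 : 𝕜) • (1 - x) * ((1/2 : 𝕜) • (1 + z)) * ((1/2 : 𝕜) • (1 - x)) = (1/2 : 𝕜) • 1 := by
  rw [pinching_half_smul_one_add_sub, conj_half_smul_one_add_of_anticommute hx hxz,
    half_smul_one_add_add_half_smul_one_sub]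

lemma pinching_half_smul_one_sub_of_anticommute (hx : x * x = 1) (hxz : x * z = -(z * x)) :
    (1/2 : 𝕜) • (1 + x) * ((1/2 : 𝕜) • (1 - z)) * ((1/2 : 𝕜) • (1 + x)) +
      (1/2 : 𝕜) • (1 - x) * ((1/2 : 𝕜) • (1 - z)) * ((1/2 : 𝕜) • (1 - x)) = (1/2 : 𝕜) • 1 := by
  rw [pinching_half_smul_one_add_sub, conj_half_smul_one_sub_of_anticommute hx hxz, add_comm,
    half_smul_one_add_add_half_smul_one_sub]

end Pinching

lemma isStarProjection_half_smul_one_add {A : Type*} [Ring A] [StarRing A] [Algebra ℂ A]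
    [StarModule ℂ A] {x : A} (hx : IsSelfAdjoint x) (hxx : x * x = 1) :
    IsStarProjection ((1/2 : ℂ) • (1 + x)) := by
  refine ⟨isIdempotentElem_half_smul_one_add hxx, ?_⟩
  simp [IsSelfAdjoint, hx.star_eq]

lemma isStarProjection_half_smul_one_sub {A : Type*} [Ring A] [StarRing A] [Algebra ℂ A]
    [StarModule ℂ A] {x : A} (hx : IsSelfAdjoint x) (hxx : x * x = 1) :
    IsStarProjection ((1/2 : ℂ) • (1 - x)) := by
  simpa only [sub_eq_add_neg] using
    isStarProjection_half_smul_one_add hx.neg (by rw [neg_mul_neg, hxx])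

def pauliX : Matrix (Fin 2) (Fin 2) ℂ := !![0, 1; 1, 0]

def pauliZ : Matrix (Fin 2) (Fin 2) ℂ := !![1, 0; 0, -1]

lemma pauliX_mul_self : pauliX * pauliX = 1 := by
  ext i j; fin_cases i <;> fin_cases j <;> simp [pauliX]

lemma pauliZ_mul_self : pauliZ * pauliZ = 1 := by
  ext i j; fin_cases i <;> fin_cases j <;> simp [pauliZ]

lemma pauliX_mul_pauliZ : pauliX * pauliZ = -(pauliZ * pauliX) := by
  ext i j; fin_cases i <;> fin_cases j <;> simp [pauliX, pauliZ]

lemma isSelfAdjoint_pauliX : IsSelfAdjoint pauliX := by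
  ext i j; fin_cases i <;> fin_cases j <;> simp [pauliX]

lemma isSelfAdjoint_pauliZ : IsSelfAdjoint pauliZ := by
  ext i j; fin_cases i <;> fin_cases j <;> simp [pauliZ]

lemma Smp_eq : Smp = (1/2 : ℂ) • (1 + pauliZ) := by
  ext i j; fin_cases i <;> fin_cases j <;> norm_num [Smp, pauliZ]

lemma Smm_eq : Smm = (1/2 : ℂ) • (1 - pauliZ) := by
  ext i j; fin_cases i <;> fin_cases j <;> norm_num [Smm, pauliZ]

lemma Snp_eq : Snp = (1/2 : ℂ) • (1 + pauliX) := by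
  ext i j; fin_cases i <;> fin_cases j <;> norm_num [Snp, pauliX]

lemma Snm_eq : Snm = (1/2 : ℂ) • (1 - pauliX) := by
  ext i j; fin_cases i <;> fin_cases j <;> norm_num [Snm, pauliX]

lemma Smp_mul_Snp_ne_Snp_mul_Smp : Smp * Snp ≠ Snp * Smp := by
  intro h
  have h10 := congrFun (congrFun h 1) 0
  norm_num [Smp, Snp, mul_apply] at h10

lemma isStarProjection_Smp : IsStarProjection Smp :=
  Smp_eq ▸ isStarProjection_half_smul_one_add isSelfAdjoint_pauliZ pauliZ_mul_self

lemma isStarProjection_Smm : IsStarProjection Smm :=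
  Smm_eq ▸ isStarProjection_half_smul_one_sub isSelfAdjoint_pauliZ pauliZ_mul_self

lemma isStarProjection_Snp : IsStarProjection Snp :=
  Snp_eq ▸ isStarProjection_half_smul_one_add isSelfAdjoint_pauliX pauliX_mul_self

lemma isStarProjection_Snm : IsStarProjection Snm :=
  Snm_eq ▸ isStarProjection_half_smul_one_sub isSelfAdjoint_pauliX pauliX_mul_self

/-- For the spin component observables `S^m = {Smp, Smm}` and `S^n = {Snp, Snm}` in the
directions `m = (0,0,1)` and `n = (1,0,0)`: both conditionings `(S^n|S^m)` and
`(S^m|S^n)` consist of the effects `(1/2)I`, yet `S^m` and `S^n` do not commute. -/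
theorem stmt_19 :
    seqProd Smp Snp + seqProd Smm Snp = (1/2 : ℂ) • 1 ∧
    seqProd Smp Snm + seqProd Smm Snm = (1/2 : ℂ) • 1 ∧
    seqProd Snp Smp + seqProd Snm Smp = (1/2 : ℂ) • 1 ∧
    seqProd Snp Smm + seqProd Snm Smm = (1/2 : ℂ) • 1 ∧
    Smp * Snp ≠ Snp * Smp := by
  have hZX : pauliZ * pauliX = -(pauliX * pauliZ) := by rw [pauliX_mul_pauliZ, neg_neg]
  simp only [isStarProjection_Smp.seqProd_eq, isStarProjection_Smm.seqProd_eq,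
    isStarProjection_Snp.seqProd_eq, isStarProjection_Snm.seqProd_eq]
  refine ⟨?_, ?_, ?_, ?_, Smp_mul_Snp_ne_Snp_mul_Smp⟩ <;>
    simp only [Smp_eq, Smm_eq, Snp_eq, Snm_eq]
  · exact pinching_half_smul_one_add_of_anticommute pauliZ_mul_self hZX
  · exact pinching_half_smul_one_sub_of_anticommute pauliZ_mul_self hZX
  · exact pinching_half_smul_one_add_of_anticommute pauliX_mul_self pauliX_mul_pauliZ
  · exact pinching_half_smul_one_sub_of_anticommute pauliX_mul_self pauliX_mul_pauliZ
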